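/- arXiv:2602.23860 — 3 statements merged into one kernel-verified Lean document; each statement's English description precedes it below -/
import Mathlib

section
/- Let l ≥ 2 and let S be a finite set of functions from Fin l to Bool that is a covering family of strength 2. Then 2 * l ≤ 2 ^ (Finset.card S). (Consequently the number of rows of any binary covering array of strength 2 with l columns is at least log₂(2l), which yields the log log term in the paper's lower bound of Ω(k + log log(⌈n/4⌉ − k)) header bits.) -/
/-- `S` is a covering family of strength `t`: for every injective choice of `t` columns and
every pattern `p`, some row `s ∈ S` matches `p` on those columns. -/
def IsCoveringFamily (l t : ℕ) (S : Finset (Fin l → Bool)) : Prop :=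
  ∀ c : Fin t → Fin l, Function.Injective c →
    ∀ p : Fin t → Bool, ∃ s ∈ S, ∀ i : Fin t, s (c i) = p i

theorem stmt_5 (l : ℕ) (hl : 2 ≤ l)
    (S : Finset (Fin l → Bool)) (hS : IsCoveringFamily l 2 S) :
    2 * l ≤ 2 ^ S.card := by
  -- the map sending (column, flip) to a function S → Bool
  set F : Fin l × Bool → ({ x // x ∈ S } → Bool) :=
    fun ib s => xor (s.1 ib.1) ib.2 with hF
  have hinj : Function.Injective F := by
    rintro ⟨i, b⟩ ⟨j, b'⟩ h
    simp only [hF, funext_iff] at h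
    by_cases hij : i = j
    · subst hij
      -- S is nonempty
      have h0 : (0 : ℕ) < l := by omega
      have h1 : (1 : ℕ) < l := by omega
      have hcinj : Function.Injective (fun k : Fin 2 => if k = 0 then (⟨0, h0⟩ : Fin l) else ⟨1, h1⟩) := by
        intro a b hab
        fin_cases a <;> fin_cases b <;> simp_all
      obtain ⟨s, hsS, -⟩ := hS _ hcinj (fun _ => true)
      simp only [Prod.mk.injEq]
      refine ⟨trivial, ?_⟩
      have := h ⟨s, hsS⟩
      simp only [] at this
      cases hb : s i <;> cases b <;> cases b' <;> simp_all
    · -- choose a row with s i = b and s j = !b'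
      have hcinj : Function.Injective ![i, j] := by
        intro a c hac
        fin_cases a <;> fin_cases c <;> simp_all [Matrix.cons_val_zero, Matrix.cons_val_one]
      obtain ⟨s, hsS, hs⟩ := hS ![i, j] hcinj ![b, !b']
      have h1 := hs 0
      have h2 := hs 1
      simp only [Matrix.cons_val_zero, Matrix.cons_val_one, Matrix.head_cons] at h1 h2
      have hc := h ⟨s, hsS⟩
      simp only [] at hc
      rw [h1, h2] at hc
      cases b <;> cases b' <;> simp_all
  have hcard := Fintype.card_le_of_injective F hinj
  simpa [Fintype.card_fun, mul_comm] using hcard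
end

section
/- Every finite set S of functions from Fin 4 to Bool that is a covering family of strength 2 has cardinality at least 5. (Together with the existence of the explicit five-row example, this shows CAN(2, 4, 2) = 5, i.e., the paper's example covering array is optimal.) -/
lemma tri_aux : ∀ s t u : Fin 4 → Bool,
    (∀ j k : Fin 4, j ≠ k → ¬(s j = t j ∧ s k = t k)) →
    (∀ j k : Fin 4, j ≠ k → ¬(s j = u j ∧ s k = u k)) →
    (∀ j k : Fin 4, j ≠ k → ¬(t j = u j ∧ t k = u k)) → False := by decide

theorem stmt_7 (S : Finset (Fin 4 → Bool)) (hS : IsCoveringFamily 4 2 S) :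
    5 ≤ S.card := by
  by_contra h
  push_neg at h
  have hcard : S.card ≤ 4 := Nat.lt_succ_iff.mp h
  -- for each pair of distinct columns j k, covering gives a surjection S → Bool × Bool
  have hsurj : ∀ j k : Fin 4, j ≠ k → ∀ b : Bool × Bool,
      ∃ s ∈ S, (s j, s k) = b := by
    intro j k hjk b
    have hinj : Function.Injective ![j, k] := by
      intro x y hxy
      fin_cases x <;> fin_cases y <;> simp_all <;> exact absurd hxy hjk
    obtain ⟨s, hs, hm⟩ := hS ![j, k] hinj ![b.1, b.2]
    refine ⟨s, hs, ?_⟩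
    have h0 := hm 0
    have h1 := hm 1
    simp at h0 h1
    simp [h0, h1]
  have hU : (Finset.univ : Finset (Bool × Bool)).card = 4 := by decide
  -- hence the map s ↦ (s j, s k) is injective on S
  have hinj : ∀ j k : Fin 4, j ≠ k → ∀ x ∈ S, ∀ y ∈ S,
      (x j, x k) = (y j, y k) → x = y := by
    intro j k hjk x hx y hy hxy
    exact Finset.inj_on_of_surj_on_of_card_le
      (s := S) (t := (Finset.univ : Finset (Bool × Bool)))
      (fun a _ => (a j, a k)) (fun a _ => Finset.mem_univ _)
      (fun b _ => by
        obtain ⟨s, hs, hsb⟩ := hsurj j k hjk b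
        exact ⟨s, hs, hsb⟩)
      (by omega) hx hy hxy
  -- S has more than 2 elements
  have h4 : (Finset.univ : Finset (Bool × Bool)).card ≤ S.card := by
    apply Finset.card_le_card_of_surjOn (fun s : Fin 4 → Bool => (s 0, s 1))
    intro b _
    obtain ⟨s, hs, hsb⟩ := hsurj 0 1 (by decide) b
    exact ⟨s, hs, hsb⟩
  have h3 : 2 < S.card := by omega
  obtain ⟨x, hx, y, hy, z, hz, hxy, hxz, hyz⟩ := Finset.two_lt_card.mp h3
  refine tri_aux x y z ?_ ?_ ?_
  · intro j k hjk ⟨e1, e2⟩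
    exact hxy (hinj j k hjk x hx y hy (by rw [e1, e2]))
  · intro j k hjk ⟨e1, e2⟩
    exact hxz (hinj j k hjk x hx z hz (by rw [e1, e2]))
  · intro j k hjk ⟨e1, e2⟩
    exact hyz (hinj j k hjk y hy z hz (by rw [e1, e2]))
end

section
/- Let l, k, h be natural numbers with 2 ≤ k ≤ l, and let S be a finite set of functions from Fin l to Bool that is a covering family of strength k with Finset.card S ≤ 2^h. Then k ≤ h and 2 * l ≤ 2 ^ (2 ^ h). (This is the combinatorial core of the paper's Theorem: in the chain network with l decision points, realized with n ≥ 4k + 5 nodes so that l = ⌈n/4⌉ − 1, the number h of rewritable header bits must be Ω(k + log log(⌈n/4⌉ − k)).) -/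
lemma cover_two (l k : ℕ) (hk2 : 2 ≤ k) (hkl : k ≤ l)
    (S : Finset (Fin l → Bool)) (hS : IsCoveringFamily l k S) :
    IsCoveringFamily l 2 S := by
  intro c2 hc2 p2
  classical
  set m := k - 2 with hm
  have h2m : k = 2 + m := by omega
  -- embed Fin m into the complement of the range of c2
  have hcardc : Fintype.card {x : Fin l // x ∈ Set.range c2} = 2 := by
    rw [Fintype.card_congr (Equiv.ofInjective c2 hc2).symm, Fintype.card_fin]
  have hcompl : Fintype.card {x : Fin l // x ∉ Set.range c2} = l - 2 := by
    rw [Fintype.card_subtype_compl, hcardc, Fintype.card_fin]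
  have hmle : Fintype.card (Fin m) ≤ Fintype.card {x : Fin l // x ∉ Set.range c2} := by
    rw [Fintype.card_fin, hcompl]; omega
  obtain ⟨e⟩ := Function.Embedding.nonempty_of_card_le hmle
  set f : Fin 2 ⊕ Fin m → Fin l := Sum.elim c2 (fun j => (e j).1) with hf
  have hfinj : Function.Injective f := by
    intro a b hab
    cases a with
    | inl a => cases b with
      | inl b => exact congrArg (Sum.inl (β := Fin m)) (hc2 hab)
      | inr b => exact absurd ⟨a, hab⟩ (e b).2
    | inr a => cases b with
      | inl b => exact absurd ⟨b, hab.symm⟩ (e a).2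
      | inr b =>
          have : e a = e b := Subtype.ext hab
          exact congrArg (Sum.inr (α := Fin 2)) (e.injective this)
  set c : Fin k → Fin l := fun i => f (finSumFinEquiv.symm (Fin.cast h2m i)) with hc
  have hcinj : Function.Injective c := by
    intro a b hab
    have := hfinj hab
    have := finSumFinEquiv.symm.injective this
    simpa using congrArg (Fin.cast h2m.symm) (Fin.cast_injective h2m this ▸ rfl : Fin.cast h2m a = Fin.cast h2m b)
  set q : Fin k → Bool := fun i => Sum.elim p2 (fun _ => true) (finSumFinEquiv.symm (Fin.cast h2m i)) with hq
  obtain ⟨s, hsS, hs⟩ := hS c hcinj q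
  refine ⟨s, hsS, fun i2 => ?_⟩
  set i : Fin k := Fin.cast h2m.symm (finSumFinEquiv (Sum.inl i2)) with hi
  have hkey : finSumFinEquiv.symm (Fin.cast h2m i) = Sum.inl i2 := by
    simp [hi]
  have := hs i
  simp only [hc, hq, hkey, Sum.elim_inl] at this
  exact this

theorem stmt_8 (l k h : ℕ) (hk2 : 2 ≤ k) (hkl : k ≤ l)
    (S : Finset (Fin l → Bool)) (hS : IsCoveringFamily l k S)
    (hcard : S.card ≤ 2 ^ h) :
    k ≤ h ∧ 2 * l ≤ 2 ^ (2 ^ h) := by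
  classical
  have hS2 := cover_two l k hk2 hkl S hS
  -- Part 1 : 2^k ≤ |S|
  have hcinj : Function.Injective (Fin.castLE hkl) := (Fin.castLEEmb hkl).injective
  have hchoose : ∀ p : Fin k → Bool,
      ∃ s, s ∈ S ∧ ∀ i, s (Fin.castLE hkl i) = p i := by
    intro p
    obtain ⟨s, hsS, hs⟩ := hS (Fin.castLE hkl) hcinj p
    exact ⟨s, hsS, hs⟩
  set g : (Fin k → Bool) → ↥S := fun p => ⟨(hchoose p).choose, (hchoose p).choose_spec.1⟩
    with hg
  have hginj : Function.Injective g := by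
    intro p1 p2 hp
    funext i
    have h1 := (hchoose p1).choose_spec.2 i
    have h2 := (hchoose p2).choose_spec.2 i
    rw [← h1, ← h2]
    exact congrFun (congrArg Subtype.val hp) _
  have hcard1 : 2 ^ k ≤ S.card := by
    have := Fintype.card_le_of_injective g hginj
    simpa [Fintype.card_coe] using this
  have hkh : k ≤ h := by
    have : 2 ^ k ≤ 2 ^ h := le_trans hcard1 hcard
    exact (Nat.pow_le_pow_iff_right (by norm_num)).mp this
  refine ⟨hkh, ?_⟩
  -- Part 2 : 2l ≤ 2^|S|
  have hl2 : 2 ≤ l := le_trans hk2 hkl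
  set g2 : Fin l × Bool → (↥S → Bool) := fun jb s => xor jb.2 (s.1 jb.1) with hg2
  have hg2inj : Function.Injective g2 := by
    rintro ⟨j1, b1⟩ ⟨j2, b2⟩ hEq
    by_cases hj : j1 = j2
    · subst hj
      -- find any element of S
      have h01 : (⟨0, by omega⟩ : Fin l) ≠ ⟨1, by omega⟩ := by
        simp [Fin.ext_iff]
      have hinj2 : Function.Injective (![(⟨0, by omega⟩ : Fin l), ⟨1, by omega⟩]) := by
        intro a b hab
        fin_cases a <;> fin_cases b <;> simp_all [Fin.ext_iff]
      obtain ⟨s, hsS, -⟩ := hS2 _ hinj2 (fun _ => true)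
      have := congrFun hEq ⟨s, hsS⟩
      simp only [hg2] at this
      cases b1 <;> cases b2 <;> simp_all
    · have hinj2 : Function.Injective (![j1, j2]) := by
        intro a b hab
        fin_cases a <;> fin_cases b <;> simp_all [Fin.ext_iff]
      obtain ⟨s, hsS, hs⟩ := hS2 _ hinj2 ![b1, !b2]
      have h1 := hs 0
      have h2 := hs 1
      simp only [Matrix.cons_val_zero, Matrix.cons_val_one, Matrix.head_cons] at h1 h2
      have := congrFun hEq ⟨s, hsS⟩
      simp only [hg2, h1, h2] at this
      cases b1 <;> cases b2 <;> simp_all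
  have hcard2 : Fintype.card (Fin l × Bool) ≤ Fintype.card (↥S → Bool) :=
    Fintype.card_le_of_injective g2 hg2inj
  have hc2 : 2 * l ≤ 2 ^ S.card := by
    simpa [Fintype.card_fun, Fintype.card_coe, mul_comm] using hcard2
  calc 2 * l ≤ 2 ^ S.card := hc2
    _ ≤ 2 ^ 2 ^ h := Nat.pow_le_pow_right (by norm_num) hcard
end
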